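/- arXiv:2403.16705 — 6 statements merged into one kernel-verified Lean document; each statement's English description precedes it below -/
import Mathlib

section
/- Let p0, p3 be nonzero complex numbers and set p1 = q1·p0 and p2 = q1⁻¹·p0; assume all denominators below are nonzero. Define h(z1,z2) = −(z1 − q2 z2)/(z2 − q2 z1) and k(z,w) = ((z − q1 w)(z − q3 w))/((w − q1 z)(w − q3 z)). Then 1 + h(p3,p1) − h(p3,p1) k(p3,p0) − h(p3,p1) k(p3,p0) h(p3,p2) = 0. -/
/-- The degenerate four-term identity used to verify the Serre relation in the
codimension-two configurations of boxes. -/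
theorem serre_degenerate_identity
    (q d : ℂ) (hq : q ≠ 0) (hd : d ≠ 0)
    (q1 q2 q3 : ℂ) (hq1 : q1 = q⁻¹ * d) (hq2 : q2 = q ^ 2) (hq3 : q3 = q⁻¹ * d⁻¹)
    (p0 p3 : ℂ) (hp0 : p0 ≠ 0) (hp3 : p3 ≠ 0)
    (p1 p2 : ℂ) (hp1 : p1 = q1 * p0) (hp2 : p2 = q1⁻¹ * p0)
    (h k : ℂ → ℂ → ℂ)
    (hh : ∀ a b : ℂ, h a b = -(a - q2 * b) / (b - q2 * a))
    (hk : ∀ a b : ℂ, k a b = ((a - q1 * b) * (a - q3 * b)) / ((b - q1 * a) * (b - q3 * a)))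
    (hden1 : p1 - q2 * p3 ≠ 0) (hden2 : p2 - q2 * p3 ≠ 0)
    (hden3 : p0 - q1 * p3 ≠ 0) (hden4 : p0 - q3 * p3 ≠ 0) :
    1 + h p3 p1 - h p3 p1 * k p3 p0 - h p3 p1 * k p3 p0 * h p3 p2 = 0 := by
  subst hq1 hq2 hq3 hp1 hp2
  -- scaled numerators and denominators
  set n1 : ℂ := -(q * p3 - q ^ 2 * d * p0) with hn1
  set D1 : ℂ := d * p0 - q ^ 3 * p3 with hD1
  set n2 : ℂ := (q * p3 - d * p0) * (q * d * p3 - p0) with hn2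
  set D2 : ℂ := (q * p0 - d * p3) * (q * d * p0 - p3) with hD2
  set n3 : ℂ := -(d * p3 - q ^ 3 * p0) with hn3
  set D3 : ℂ := q * p0 - q ^ 2 * d * p3 with hD3
  have hD1ne : D1 ≠ 0 := by
    have : D1 = q * (q⁻¹ * d * p0 - q ^ 2 * p3) := by
      rw [hD1]; field_simp
    rw [this]; exact mul_ne_zero hq hden1
  have hD2ne : D2 ≠ 0 := by
    have : D2 = (q * (p0 - q⁻¹ * d * p3)) * ((q * d) * (p0 - q⁻¹ * d⁻¹ * p3)) := by
      rw [hD2]; field_simp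
    rw [this]
    exact mul_ne_zero (mul_ne_zero hq hden3) (mul_ne_zero (mul_ne_zero hq hd) hden4)
  have hq1ne : (q⁻¹ * d : ℂ) ≠ 0 := mul_ne_zero (inv_ne_zero hq) hd
  have hD3ne : D3 ≠ 0 := by
    have : D3 = d * ((q⁻¹ * d)⁻¹ * p0 - q ^ 2 * p3) := by
      rw [hD3]; field_simp
    rw [this]; exact mul_ne_zero hd hden2
  have e1 : h p3 (q⁻¹ * d * p0) = n1 / D1 := by
    rw [hh]
    rw [div_eq_div_iff hden1 hD1ne]
    rw [hn1, hD1]; field_simp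
  have e2 : k p3 p0 = n2 / D2 := by
    rw [hk]
    rw [div_eq_div_iff (mul_ne_zero hden3 hden4) hD2ne]
    rw [hn2, hD2]; field_simp
  have e3 : h p3 ((q⁻¹ * d)⁻¹ * p0) = n3 / D3 := by
    rw [hh]
    rw [div_eq_div_iff hden2 hD3ne]
    rw [hn3, hD3]; field_simp
  rw [e1, e2, e3]
  field_simp
  rw [hn1, hD1, hn2, hD2, hn3, hD3]
  ring
end

section
/- Define Ψ(z) = 0_{q⁻¹}(z) · 1_{q q1}(z)⁻¹ and, for k ∈ ℤ, define φ_k(z) = 0_{q⁻¹ q1⁻ᵏ}(z) · 1_{q q1^{1−k}}(z)⁻¹ if k is even, and φ_k(z) = 0_{q q1^{1−k}}(z)⁻¹ · 1_{q⁻¹ q1⁻ᵏ}(z) if k is odd. Then for every integer k ≥ 0, Ψ(z) · ∏_{i=0}^{k−1} A_{i mod 2, q1⁻ⁱ}(z)⁻¹ = φ_k(z), and for every integer k < 0, Ψ(z) · ∏_{i=k}^{−1} A_{i mod 2, q1⁻ⁱ}(z) = φ_k(z), as identities of pairs of rational functions of z (componentwise, wherever denominators are nonzero). -/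
noncomputable section

/-- The pair of rational functions `A_{0,a}(z)`. -/
def rootA0 (q1 q2 q3 a : ℂ) : RatFunc ℂ × RatFunc ℂ :=
  ((RatFunc.C q2 * RatFunc.X - RatFunc.C a) / (RatFunc.X - RatFunc.C (q2 * a)),
   ((RatFunc.C q1 * RatFunc.X - RatFunc.C a) * (RatFunc.C q3 * RatFunc.X - RatFunc.C a)) /
     ((RatFunc.X - RatFunc.C (q1 * a)) * (RatFunc.X - RatFunc.C (q3 * a))))

/-- The pair of rational functions `A_{1,a}(z)`. -/
def rootA1 (q1 q2 q3 a : ℂ) : RatFunc ℂ × RatFunc ℂ :=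
  (((RatFunc.C q1 * RatFunc.X - RatFunc.C a) * (RatFunc.C q3 * RatFunc.X - RatFunc.C a)) /
     ((RatFunc.X - RatFunc.C (q1 * a)) * (RatFunc.X - RatFunc.C (q3 * a))),
   (RatFunc.C q2 * RatFunc.X - RatFunc.C a) / (RatFunc.X - RatFunc.C (q2 * a)))

/-- `A_{i mod 2, a}(z)` for `i : ℤ`. -/
def rootA (q1 q2 q3 : ℂ) (i : ℤ) (a : ℂ) : RatFunc ℂ × RatFunc ℂ :=
  if Even i then rootA0 q1 q2 q3 a else rootA1 q1 q2 q3 a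

/-- The pair of rational functions `0_a(z) = ((qz - a)/(z - aq), 1)`. -/
def fwt0 (q a : ℂ) : RatFunc ℂ × RatFunc ℂ :=
  ((RatFunc.C q * RatFunc.X - RatFunc.C a) / (RatFunc.X - RatFunc.C (a * q)), 1)

/-- The pair of rational functions `1_a(z) = (1, (qz - a)/(z - aq))`. -/
def fwt1 (q a : ℂ) : RatFunc ℂ × RatFunc ℂ :=
  (1, (RatFunc.C q * RatFunc.X - RatFunc.C a) / (RatFunc.X - RatFunc.C (a * q)))

/-- `Ψ(z) = 0_{q⁻¹}(z) · 1_{q q₁}(z)⁻¹`, the highest ℓ-weight of the vector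
representation. -/
def vecPsi (q q1 : ℂ) : RatFunc ℂ × RatFunc ℂ :=
  fwt0 q q⁻¹ * (fwt1 q (q * q1))⁻¹

/-- The ℓ-weight `φ_k(z)` of the state `k` of the vector representation. -/
def vecWt (q q1 : ℂ) (k : ℤ) : RatFunc ℂ × RatFunc ℂ :=
  if Even k then fwt0 q (q⁻¹ * q1 ^ (-k)) * (fwt1 q (q * q1 ^ (1 - k)))⁻¹
  else (fwt0 q (q * q1 ^ (1 - k)))⁻¹ * fwt1 q (q⁻¹ * q1 ^ (-k))

/-!
Swapping the two components exchanges `0_a` with `1_a` and `A_{0,a}` with `A_{1,a}`, and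
`φ_k` is, up to this swap, a single pair `0_{a/q} · 1_{q q₁ a}⁻¹` evaluated at `a = q₁⁻ᵏ`.
Since `q₁ q₂ q₃ = 1`, the factor `A_{0,a}` splits as `0_{a/q} 0_{qa} (1_{q q₁ a} 1_{a/(q q₁)})⁻¹`,
which gives `A_{k mod 2, q₁⁻ᵏ} = φ_k / φ_{k+1}` for every `k ∈ ℤ`. All these pairs are units, so
both products telescope from `φ_0 = Ψ`.
-/

open Finset RatFunc

theorem Int.mul_prod_Ico_of_mul_eq_succ {M : Type*} [CommMonoid M] {f g : ℤ → M}
    (h : ∀ i, f i * g i = f (i + 1)) {m n : ℤ} (hmn : m ≤ n) :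
    f m * ∏ i ∈ Ico m n, g i = f n := by
  induction n, hmn using Int.leInduction with
  | base => simp
  | succ n hmn ih =>
    rw [← insert_Ico_right_eq_Ico_add_one hmn, prod_insert right_notMem_Ico, mul_left_comm,
      ih, mul_comm, h]

theorem Int.mul_prod_Ico_of_succ_mul_eq {M : Type*} [CommMonoid M] {f g : ℤ → M}
    (h : ∀ i, f (i + 1) * g i = f i) {m n : ℤ} (hmn : m ≤ n) :
    f n * ∏ i ∈ Ico m n, g i = f m := by
  induction m, hmn using Int.leInductionDown with
  | base => simp
  | pred m hmn ih =>
    rw [← insert_Ico_left_eq_Ico_sub_one hmn, prod_insert (by simp), mul_left_comm, ih,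
      mul_comm, ← h (m - 1), sub_add_cancel]

theorem RatFunc.X_sub_C_ne_zero {K : Type*} [Field K] (a : K) : (X - C a : RatFunc K) ≠ 0 := by
  rw [← algebraMap_C, ← algebraMap_X, ← map_sub]
  exact algebraMap_ne_zero (Polynomial.X_sub_C_ne_zero a)

theorem RatFunc.C_mul_X_sub_C_ne_zero {K : Type*} [Field K] {c : K} (hc : c ≠ 0) (a : K) :
    (C c * X - C a : RatFunc K) ≠ 0 := by
  have hC : C c ≠ 0 := by simpa using hc
  rw [show C c * X - C a = C c * (X - C (c⁻¹ * a)) by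
    rw [mul_sub, map_mul, ← mul_assoc, ← map_mul, mul_inv_cancel₀ hc, map_one, one_mul]]
  exact mul_ne_zero hC (X_sub_C_ne_zero _)

theorem fwt0_swap (q a : ℂ) : (fwt0 q a).swap = fwt1 q a := rfl

theorem fwt1_swap (q a : ℂ) : (fwt1 q a).swap = fwt0 q a := rfl

theorem rootA0_swap (q1 q2 q3 a : ℂ) : (rootA0 q1 q2 q3 a).swap = rootA1 q1 q2 q3 a := rfl

theorem isUnit_fwt0 {q : ℂ} (hq : q ≠ 0) (a : ℂ) : IsUnit (fwt0 q a) :=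
  Prod.isUnit_iff.mpr ⟨(div_ne_zero (C_mul_X_sub_C_ne_zero hq a) (X_sub_C_ne_zero _)).isUnit,
    isUnit_one⟩

theorem isUnit_fwt1 {q : ℂ} (hq : q ≠ 0) (a : ℂ) : IsUnit (fwt1 q a) :=
  (isUnit_fwt0 hq a).map (MulEquiv.prodComm)

def evenWt (q q1 a : ℂ) : RatFunc ℂ × RatFunc ℂ :=
  fwt0 q (q⁻¹ * a) * (fwt1 q (q * (q1 * a)))⁻¹

theorem vecWt_of_even {q q1 : ℂ} (hq1 : q1 ≠ 0) {k : ℤ} (hk : Even k) :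
    vecWt q q1 k = evenWt q q1 (q1 ^ (-k)) := by
  rw [vecWt, if_pos hk, evenWt, sub_eq_add_neg, zpow_one_add₀ hq1]

theorem vecWt_of_odd {q q1 : ℂ} (hq1 : q1 ≠ 0) {k : ℤ} (hk : Odd k) :
    vecWt q q1 k = (evenWt q q1 (q1 ^ (-k))).swap := by
  rw [vecWt, if_neg (Int.not_even_iff_odd.mpr hk), evenWt, sub_eq_add_neg, zpow_one_add₀ hq1,
    Prod.swap_mul, Prod.swap_inv, fwt0_swap, fwt1_swap, mul_comm]

theorem isUnit_vecWt {q : ℂ} (hq : q ≠ 0) (q1 : ℂ) (k : ℤ) : IsUnit (vecWt q q1 k) := by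
  unfold vecWt
  split_ifs
  · exact (isUnit_fwt0 hq _).mul (isUnit_fwt1 hq _).inv
  · exact (isUnit_fwt0 hq _).inv.mul (isUnit_fwt1 hq _)

theorem fst_fwt0_mul_fst_fwt0 {q : ℂ} (hq : q ≠ 0) (a : ℂ) :
    (fwt0 q (q⁻¹ * a)).1 * (fwt0 q (q * a)).1 = (C (q ^ 2) * X - C a) / (X - C (q ^ 2 * a)) := by
  rw [fwt0, fwt0, div_mul_div_comm, div_eq_div_iff
    (mul_ne_zero (X_sub_C_ne_zero _) (X_sub_C_ne_zero _)) (X_sub_C_ne_zero _)]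
  simp only [map_mul, map_inv₀, map_pow]
  field_simp [show C q ≠ 0 by simpa using hq]

theorem fst_fwt0_mul_fst_fwt0_inv {q q1 q3 : ℂ} (h : q ^ 2 * q1 * q3 = 1) (a : ℂ) :
    ((fwt0 q (q * q1 * a)).1 * (fwt0 q (q⁻¹ * q1⁻¹ * a)).1)⁻¹ =
      (C q1 * X - C a) * (C q3 * X - C a) / ((X - C (q1 * a)) * (X - C (q3 * a))) := by
  have hq : q ≠ 0 := by rintro rfl; simp at h
  have hq1 : q1 ≠ 0 := by rintro rfl; simp at h
  rw [fwt0, fwt0, div_mul_div_comm, inv_div, div_eq_div_iff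
    (mul_ne_zero (C_mul_X_sub_C_ne_zero hq _) (C_mul_X_sub_C_ne_zero hq _))
    (mul_ne_zero (X_sub_C_ne_zero _) (X_sub_C_ne_zero _))]
  have hC : C q ^ 2 * C q1 * C q3 = 1 := by simpa using congrArg C h
  simp only [map_mul, map_inv₀]
  field_simp [show C q ≠ 0 by simpa using hq, show C q1 ≠ 0 by simpa using hq1]
  linear_combination (X * C q1 - C a) * (X - C q1 * C a) * (C a ^ 2 - X ^ 2) * hC

theorem rootA0_eq {q q1 q3 : ℂ} (h : q ^ 2 * q1 * q3 = 1) (a : ℂ) :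
    rootA0 q1 (q ^ 2) q3 a =
      fwt0 q (q⁻¹ * a) * fwt0 q (q * a) * (fwt1 q (q * q1 * a) * fwt1 q (q⁻¹ * q1⁻¹ * a))⁻¹ := by
  have hq : q ≠ 0 := by rintro rfl; simp at h
  ext
  · show _ = _ * _ * (1 * 1)⁻¹
    rw [fst_fwt0_mul_fst_fwt0 hq, mul_one, inv_one, mul_one]
    rfl
  · show _ = 1 * 1 * ((fwt0 q (q * q1 * a)).1 * (fwt0 q (q⁻¹ * q1⁻¹ * a)).1)⁻¹
    rw [fst_fwt0_mul_fst_fwt0_inv h, one_mul, one_mul]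
    rfl

theorem rootA0_mul_eq {q q1 q3 : ℂ} (h : q ^ 2 * q1 * q3 = 1) (b : ℂ) :
    rootA0 q1 (q ^ 2) q3 (q1 * b) = evenWt q q1 (q1 * b) * (evenWt q q1 b).swap⁻¹ := by
  have hq1 : q1 ≠ 0 := by rintro rfl; simp at h
  rw [rootA0_eq h, evenWt, evenWt, Prod.swap_mul, Prod.swap_inv, fwt0_swap, fwt1_swap,
    show q * q1 * (q1 * b) = q * (q1 * (q1 * b)) by ring,
    show q⁻¹ * q1⁻¹ * (q1 * b) = q⁻¹ * b by field_simp]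
  simp only [mul_inv, inv_inv]
  rw [mul_mul_mul_comm, mul_comm (fwt0 q (q * (q1 * b)))]

theorem rootA_eq_vecWt_div {q q1 q3 : ℂ} (h : q ^ 2 * q1 * q3 = 1) (k : ℤ) :
    rootA q1 (q ^ 2) q3 k (q1 ^ (-k)) = vecWt q q1 k / vecWt q q1 (k + 1) := by
  have hq1 : q1 ≠ 0 := by rintro rfl; simp at h
  have ha : q1 ^ (-k) = q1 * q1 ^ (-(k + 1)) := by rw [← zpow_one_add₀ hq1]; ring_nf
  rcases Int.even_or_odd k with hk | hk
  · rw [rootA, if_pos hk, vecWt_of_even hq1 hk, vecWt_of_odd hq1 (hk.add_one), ha,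
      rootA0_mul_eq h, div_eq_mul_inv]
  · rw [rootA, if_neg (Int.not_even_iff_odd.mpr hk), vecWt_of_odd hq1 hk,
      vecWt_of_even hq1 hk.add_one, ha, ← rootA0_swap, rootA0_mul_eq h, div_eq_mul_inv,
      Prod.swap_mul, Prod.swap_inv, Prod.swap_swap]

/-- The telescoping identity computing the ℓ-weights of the states of the
vector representation of the quantum toroidal `gl₂` algebra. -/
theorem vector_rep_weights
    (q d : ℂ) (hq : q ≠ 0) (hd : d ≠ 0)
    (q1 q2 q3 : ℂ) (hq1 : q1 = q⁻¹ * d) (hq2 : q2 = q ^ 2) (hq3 : q3 = q⁻¹ * d⁻¹)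
    (k : ℤ) :
    (0 ≤ k →
      vecPsi q q1 * ∏ i ∈ Finset.Ico (0 : ℤ) k, (rootA q1 q2 q3 i (q1 ^ (-i)))⁻¹
        = vecWt q q1 k) ∧
    (k < 0 →
      vecPsi q q1 * ∏ i ∈ Finset.Icc k (-1 : ℤ), rootA q1 q2 q3 i (q1 ^ (-i))
        = vecWt q q1 k) := by
  have h : q ^ 2 * q1 * q3 = 1 := by subst hq1 hq3; field_simp
  subst hq2
  have hψ : vecPsi q q1 = vecWt q q1 0 := by simp [vecPsi, vecWt]
  refine ⟨fun hk => ?_, fun hk => ?_⟩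
  · refine hψ ▸ Int.mul_prod_Ico_of_mul_eq_succ (fun i => ?_) hk
    rw [rootA_eq_vecWt_div h, inv_div, (isUnit_vecWt hq q1 i).mul_div_cancel]
  · rw [hψ, show (-1 : ℤ) = 0 - 1 by norm_num, Icc_sub_one_right_eq_Ico]
    refine Int.mul_prod_Ico_of_succ_mul_eq (fun i => ?_) hk.le
    rw [rootA_eq_vecWt_div h, (isUnit_vecWt hq q1 (i + 1)).mul_div_cancel]
end
end

section
/- As an identity of formal power series in two variables u, v: the sum over all partitions λ of u^{o(λ)} v^{e(λ)} equals ∏_{j=1}^{∞} (1 − (uv)^j)^{−1} (1 − u(uv)^{j−1})^{−1}. -/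
/-!
A partition is determined by its row multiplicities `c t` (`t ≥ 1`), recovered from the column
lengths as `c t = λ'_t - λ'_{t+1}`, and conversely `λ'_j = Σ_{t ≥ j} c t`. Since colours alternate
along a row starting with `u`, a row of length `t` contributes `u^⌈t/2⌉ v^⌊t/2⌋`, so the
generating function is `∏_{t ≥ 1} (1 - u^⌈t/2⌉ v^⌊t/2⌋)⁻¹`; grouping the factors `t = 2j` and
`t = 2j - 1` gives the stated product. For the coefficient of `u^m v^n` only rows of length at
most `m + n` matter, which is why the truncation at `N ≥ m + n` already gives the exact count.
-/

/-- A partition: a weakly decreasing sequence of nonnegative integers with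
finitely many nonzero terms. -/
structure CPartition where
  parts : ℕ → ℕ
  antitone : Antitone parts
  finite_support : Set.Finite {i : ℕ | parts i ≠ 0}

/-- The conjugate partition: `λ'_j = #{i : λ_i ≥ j}` (columns indexed from 1). -/
noncomputable def CPartition.conj (lam : CPartition) (j : ℕ) : ℕ :=
  Nat.card {i : ℕ | j ≤ lam.parts i}

/-- `o(λ) = Σ_{j odd} λ'_j`, the number of boxes of `λ` in odd-indexed columns. -/
noncomputable def CPartition.oddCols (lam : CPartition) : ℕ :=
  ∑' j : ℕ, if Odd j then lam.conj j else 0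

/-- `e(λ) = Σ_{j even, j ≥ 2} λ'_j`, the number of boxes of `λ` in even-indexed
columns. -/
noncomputable def CPartition.evenCols (lam : CPartition) : ℕ :=
  ∑' j : ℕ, if Even j ∧ j ≠ 0 then lam.conj j else 0

open Finset

theorem mem_range_nsmul_iff {M : Type*} [AddCommMonoid M] [PartialOrder M]
    [CanonicallyOrderedAdd M] [Sub M] [OrderedSub M] [AddLeftReflectLE M] {d e : M} (he : e ≠ 0) :
    e ∈ (Set.range fun n : ℕ => n • d) ↔ d ≤ e ∧ e - d ∈ (Set.range fun n : ℕ => n • d) := by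
  constructor
  · rintro ⟨_ | n, rfl⟩
    · exact absurd (zero_smul ℕ d) he
    · simp only [succ_nsmul, le_add_self, add_tsub_cancel_right, Set.mem_range_self, and_self]
  · rintro ⟨hde, n, hn⟩
    exact ⟨n + 1, by simp only [succ_nsmul, hn, tsub_add_cancel_of_le hde]⟩

theorem card_filter_finsuppAntidiag_mem_range_nsmul {ι σ : Type*} [DecidableEq ι] [DecidableEq σ]
    (s : Finset ι) (w : ι → σ →₀ ℕ) (hw : ∀ i ∈ s, w i ≠ 0) (e : σ →₀ ℕ)
    [DecidablePred fun l : ι →₀ σ →₀ ℕ => ∀ i ∈ s, l i ∈ Set.range fun n : ℕ => n • w i] :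
    #{l ∈ s.finsuppAntidiag e | ∀ i ∈ s, l i ∈ Set.range fun n : ℕ => n • w i} =
      Nat.card {c : ι →₀ ℕ // c.support ⊆ s ∧ (c.sum fun i n => n • w i) = e} := by
  let scale (c : ι →₀ ℕ) : ι →₀ σ →₀ ℕ :=
    Finsupp.onFinset c.support (fun i => c i • w i) fun i h => by
      contrapose! h; simp [Finsupp.notMem_support_iff.1 h]
  have scale_apply (c : ι →₀ ℕ) (i : ι) : scale c i = c i • w i := Finsupp.onFinset_apply
  have sum_scale {c : ι →₀ ℕ} (hc : c.support ⊆ s) :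
      s.sum (scale c) = c.sum fun i n => n • w i := by
    rw [Finsupp.sum_of_support_subset c hc (fun i n => n • w i) fun _ _ => zero_smul ℕ _]
    exact sum_congr rfl fun i _ => scale_apply c i
  rw [← Nat.card_eq_finsetCard]
  symm
  refine Nat.card_eq_of_bijective (fun c => ⟨scale c.1, ?_⟩) ⟨?_, ?_⟩
  · obtain ⟨c, hsupp, hsum⟩ := c
    refine mem_filter.2 ⟨mem_finsuppAntidiag.2 ⟨by rw [sum_scale hsupp, hsum],
      Finsupp.support_onFinset_subset.trans hsupp⟩, fun i _ => ⟨c i, (scale_apply c i).symm⟩⟩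
  · intro ⟨c, hc, _⟩ ⟨c', hc', _⟩ h
    ext i
    simp only [Subtype.mk.injEq] at h
    by_cases hi : i ∈ s
    · obtain ⟨a, ha⟩ := Finsupp.ne_iff.1 (hw i hi)
      have := DFunLike.congr_fun (DFunLike.congr_fun h i) a
      simp only [scale_apply, Finsupp.smul_apply, smul_eq_mul] at this
      exact Nat.eq_of_mul_eq_mul_right (Nat.pos_of_ne_zero ha) this
    · rw [Finsupp.notMem_support_iff.1 (mt (@hc i) hi),
        Finsupp.notMem_support_iff.1 (mt (@hc' i) hi)]
  · rintro ⟨l, hl⟩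
    simp only [mem_filter, mem_finsuppAntidiag] at hl
    obtain ⟨⟨hsum, hsupp⟩, hmult⟩ := hl
    choose n hn using hmult
    let c : ι →₀ ℕ := Finsupp.onFinset s (fun i => if h : i ∈ s then n i h else 0) fun i h => by
      contrapose! h; simp [h]
    have hscale : scale c = l := by
      ext1 i
      rw [scale_apply, Finsupp.onFinset_apply]
      split_ifs with hi
      · exact hn i hi
      · rw [zero_smul, Finsupp.notMem_support_iff.1 (mt (@hsupp i) hi)]
    have hc : c.support ⊆ s := Finsupp.support_onFinset_subset
    exact ⟨⟨c, hc, by rw [← sum_scale hc, hscale, hsum]⟩, Subtype.ext hscale⟩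

theorem Finset.prod_Icc_one_two_mul {M : Type*} [CommMonoid M] (f : ℕ → M) (N : ℕ) :
    ∏ j ∈ Icc 1 N, f (2 * j) * f (2 * j - 1) = ∏ t ∈ Icc 1 (2 * N), f t := by
  induction N with
  | zero => rfl
  | succ N ih =>
    rw [prod_Icc_succ_top (by omega), ih, show 2 * (N + 1) = 2 * N + 1 + 1 by ring,
      prod_Icc_succ_top (by omega), prod_Icc_succ_top (by omega), Nat.add_sub_cancel, mul_assoc,
      mul_comm (f _)]

theorem card_filter_odd_Icc (t : ℕ) : #{j ∈ Icc 1 t | Odd j} = (t + 1) / 2 := by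
  induction t with
  | zero => rfl
  | succ t ih =>
    rw [← insert_Icc_right_eq_Icc_add_one (by omega), filter_insert]
    split_ifs with h
    · rw [card_insert_of_notMem (by simp), ih]
      have := Nat.odd_iff.1 h
      omega
    · rw [ih]
      have := Nat.not_odd_iff.1 h
      omega

theorem card_filter_even_Icc (t : ℕ) : #{j ∈ Icc 1 t | Even j ∧ j ≠ 0} = t / 2 := by
  induction t with
  | zero => rfl
  | succ t ih =>
    rw [← insert_Icc_right_eq_Icc_add_one (by omega), filter_insert]
    split_ifs with h
    · rw [card_insert_of_notMem (by simp), ih]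
      have := Nat.even_iff.1 h.1
      omega
    · rw [ih]
      have := Nat.even_iff.not.1 fun he => h ⟨he, t.succ_ne_zero⟩
      omega

theorem Finsupp.le_sum_mul_self_of_mem_support {c : ℕ →₀ ℕ} {t : ℕ} (ht : t ∈ c.support) :
    t ≤ c.sum fun t k => k * t :=
  calc t ≤ c t * t := Nat.le_mul_of_pos_left t (Nat.pos_of_ne_zero (mem_support_iff.1 ht))
    _ ≤ c.sum fun t k => k * t :=
      Finset.single_le_sum (f := fun t => c t * t) (fun _ _ => zero_le) ht

namespace MvPowerSeries

variable {σ k : Type*} [Field k]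

theorem coeff_inv_one_sub_monomial {d : σ →₀ ℕ} (hd : d ≠ 0) (e : σ →₀ ℕ) :
    coeff e ((1 - monomial d 1)⁻¹ : MvPowerSeries σ k) =
      (Set.range fun n : ℕ => n • d).indicator 1 e := by
  classical
  obtain ⟨G, hG⟩ : ∃ G : MvPowerSeries σ k,
      ∀ e, coeff e G = (Set.range fun n : ℕ => n • d).indicator 1 e := ⟨_, fun _ => rfl⟩
  suffices (1 - monomial d 1)⁻¹ = G by rw [this, hG]
  rw [MvPowerSeries.inv_eq_iff_mul_eq_one]
  · ext e
    rw [mul_sub, mul_one, mul_comm, map_sub, coeff_monomial_mul, coeff_one, hG, hG, one_mul]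
    by_cases he : e = 0
    · subst he
      have h0 : (0 : σ →₀ ℕ) ∈ Set.range fun n : ℕ => n • d := ⟨0, zero_smul ℕ d⟩
      simp [h0, hd]
    · rw [if_neg he]
      simp only [Set.indicator_apply, mem_range_nsmul_iff he, Pi.one_apply]
      split_ifs <;> simp_all
  · rw [map_sub, constantCoeff_one, ← coeff_zero_eq_constantCoeff_apply, coeff_monomial,
      if_neg (Ne.symm hd), sub_zero]
    exact one_ne_zero

theorem coeff_prod_inv_one_sub_monomial {ι : Type*} (s : Finset ι) (w : ι → σ →₀ ℕ)
    (hw : ∀ i ∈ s, w i ≠ 0) (e : σ →₀ ℕ) :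
    coeff e (∏ i ∈ s, (1 - monomial (w i) 1)⁻¹ : MvPowerSeries σ k) =
      Nat.card {c : ι →₀ ℕ // c.support ⊆ s ∧ (c.sum fun i n => n • w i) = e} := by
  classical
  rw [coeff_prod, ← card_filter_finsuppAntidiag_mem_range_nsmul s w hw e,
    natCast_card_filter]
  refine sum_congr rfl fun l _ => ?_
  rw [← prod_boole]
  exact prod_congr rfl fun i hi => by
    rw [coeff_inv_one_sub_monomial (hw i hi), Set.indicator_apply, Pi.one_apply]

end MvPowerSeries

namespace CPartition

theorem ext {lam mu : CPartition} (h : lam.parts = mu.parts) : lam = mu := by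
  cases lam; cases mu; congr

variable (lam : CPartition)

theorem setOf_le_parts_eq_Iio {j : ℕ} (hj : 1 ≤ j) :
    {i | j ≤ lam.parts i} = Set.Iio (lam.conj j) := by
  have hfin : {i | j ≤ lam.parts i}.Finite :=
    lam.finite_support.subset fun i hi => by simp only [Set.mem_ofPred_eq] at hi ⊢; omega
  have hlower : IsLowerSet {i | j ≤ lam.parts i} :=
    isLowerSet_setOfPred.2 fun a b hab h => h.trans (lam.antitone hab)
  obtain hS | ⟨a, hS⟩ := hlower.eq_univ_or_Iio
  · exact absurd (hS ▸ hfin) Set.infinite_univ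
  · rw [conj, hS, Nat.card_coe_set_eq, Set.ncard_Iio_nat]

theorem lt_conj_iff {j : ℕ} (hj : 1 ≤ j) (i : ℕ) : i < lam.conj j ↔ j ≤ lam.parts i :=
  (Set.ext_iff.1 (lam.setOf_le_parts_eq_Iio hj) i).symm

theorem ext_of_conj {lam mu : CPartition} (h : ∀ j, 1 ≤ j → lam.conj j = mu.conj j) :
    lam = mu :=
  ext <| funext fun i => eq_of_forall_lt_iff fun j => by
    rw [← Nat.add_one_le_iff, ← Nat.add_one_le_iff, ← lam.lt_conj_iff (by omega),
      ← mu.lt_conj_iff (by omega), h _ (by omega)]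

theorem conj_le_conj {a b : ℕ} (ha : 1 ≤ a) (hab : a ≤ b) : lam.conj b ≤ lam.conj a :=
  le_of_forall_lt fun i hi =>
    (lam.lt_conj_iff ha i).2 (hab.trans ((lam.lt_conj_iff (ha.trans hab) i).1 hi))

theorem conj_eq_zero {j : ℕ} (hj : lam.parts 0 < j) : lam.conj j = 0 :=
  Nat.eq_zero_of_not_pos fun h => (lam.lt_conj_iff (by omega) 0).1 h |>.not_gt hj

/-- If `c t` rows have length `t`, column `j` has length `tailSum c j = Σ_{t ≥ j} c t`. -/
def tailSum (c : ℕ →₀ ℕ) (j : ℕ) : ℕ := c.sum fun t k => if j ≤ t then k else 0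

theorem tailSum_eq_add_tailSum_succ (c : ℕ →₀ ℕ) (j : ℕ) :
    tailSum c j = c j + tailSum c (j + 1) := by
  rw [tailSum, tailSum, ← Finsupp.sum_ite_self_eq c j, ← Finsupp.sum_add]
  congr 1; ext t k
  split_ifs <;> omega

theorem tailSum_antitone (c : ℕ →₀ ℕ) : Antitone (tailSum c) := fun a b hab =>
  sum_le_sum fun t _ => by dsimp only; split_ifs <;> omega

theorem tailSum_eq_zero {c : ℕ →₀ ℕ} {j : ℕ} (hj : ∀ t ∈ c.support, t < j) : tailSum c j = 0 :=
  sum_eq_zero fun t ht => if_neg (hj t ht).not_ge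

/-- The partition with `c t` rows of length `t ≥ 1`: row `i` ends at the last column longer
than `i`. -/
noncomputable def ofCounts (c : ℕ →₀ ℕ) : CPartition where
  parts i := Nat.findGreatest (fun j => i < tailSum c j) (c.support.sup id)
  antitone _ _ hab := Nat.findGreatest_mono_left (fun _ h => hab.trans_lt h) _
  finite_support := (Set.finite_Iio (tailSum c 1)).subset fun _ hi =>
    (Nat.findGreatest_of_ne_zero rfl hi).trans_le (tailSum_antitone c (Nat.one_le_iff_ne_zero.2 hi))

theorem le_ofCounts_parts_iff (c : ℕ →₀ ℕ) {i j : ℕ} (hj : 1 ≤ j) :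
    j ≤ (ofCounts c).parts i ↔ i < tailSum c j := by
  refine ⟨fun h => ?_, fun h => Nat.le_findGreatest ?_ h⟩
  · have hlast : i < tailSum c ((ofCounts c).parts i) :=
      Nat.findGreatest_of_ne_zero (P := fun j => i < tailSum c j) rfl (by omega)
    exact hlast.trans_le (tailSum_antitone c h)
  · by_contra! hlt
    have : tailSum c j = 0 :=
      tailSum_eq_zero fun t ht => (le_sup (f := id) ht).trans_lt hlt
    omega

theorem conj_ofCounts (c : ℕ →₀ ℕ) {j : ℕ} (hj : 1 ≤ j) : (ofCounts c).conj j = tailSum c j :=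
  eq_of_forall_lt_iff fun i => by rw [lt_conj_iff _ hj, le_ofCounts_parts_iff c hj]

/-- `counts λ t` is the number of rows of length `t`. -/
noncomputable def counts : ℕ →₀ ℕ :=
  Finsupp.onFinset (Icc 1 (lam.parts 0))
    (fun t => if t = 0 then 0 else lam.conj t - lam.conj (t + 1)) fun t ht => by
      have ht0 : t ≠ 0 := fun h => ht (if_pos h)
      have hconj : lam.conj t ≠ 0 := fun h => ht (by rw [if_neg ht0, h, zero_tsub])
      have := mt lam.conj_eq_zero hconj
      rw [mem_Icc]
      omega

theorem counts_apply (t : ℕ) :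
    lam.counts t = if t = 0 then 0 else lam.conj t - lam.conj (t + 1) :=
  Finsupp.onFinset_apply

theorem counts_support_subset : lam.counts.support ⊆ Icc 1 (lam.parts 0) :=
  Finsupp.support_onFinset_subset

theorem tailSum_counts {j : ℕ} (hj : 1 ≤ j) : tailSum lam.counts j = lam.conj j := by
  induction hk : lam.parts 0 + 1 - j generalizing j with
  | zero =>
    rw [tailSum_eq_zero, lam.conj_eq_zero (by omega)]
    intro t ht
    have := mem_Icc.1 (lam.counts_support_subset ht)
    omega
  | succ k ih =>
    rw [tailSum_eq_add_tailSum_succ, ih (by omega) (by omega), counts_apply, if_neg (by omega)]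
    have := lam.conj_le_conj hj (j.le_add_right 1)
    omega

theorem counts_ofCounts {c : ℕ →₀ ℕ} (hc : c 0 = 0) : (ofCounts c).counts = c := by
  ext t
  rw [counts_apply]
  split_ifs with ht
  · rw [ht, hc]
  · rw [conj_ofCounts c (by omega), conj_ofCounts c (by omega), tailSum_eq_add_tailSum_succ]
    omega

theorem ofCounts_counts : ofCounts lam.counts = lam :=
  ext_of_conj fun j hj => by rw [conj_ofCounts _ hj, tailSum_counts _ hj]

theorem sum_ite_tailSum (p : ℕ → Prop) [DecidablePred p] {c : ℕ →₀ ℕ} {M : ℕ}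
    (hc : ∀ t ∈ c.support, t ≤ M) :
    ∑ j ∈ Icc 1 M, (if p j then tailSum c j else 0) =
      c.sum fun t k => k * #{j ∈ Icc 1 t | p j} := by
  rw [← sum_filter]
  simp only [tailSum, Finsupp.sum]
  rw [sum_comm]
  refine sum_congr rfl fun t ht => ?_
  have hfilter : {j ∈ {j ∈ Icc 1 M | p j} | j ≤ t} = {j ∈ Icc 1 t | p j} := by
    have := hc t ht
    ext j; simp only [mem_filter, mem_Icc]; grind
  rw [← sum_filter, hfilter, sum_const, smul_eq_mul, mul_comm]

theorem tsum_ite_conj (p : ℕ → Prop) [DecidablePred p] (hp : ¬ p 0) :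
    (∑' j, if p j then lam.conj j else 0) = lam.counts.sum fun t k => k * #{j ∈ Icc 1 t | p j} := by
  rw [tsum_eq_sum (s := Icc 1 (lam.parts 0)) fun j hj => ?_]
  · rw [← sum_ite_tailSum p fun t ht => (mem_Icc.1 (lam.counts_support_subset ht)).2]
    exact sum_congr rfl fun j hj => by rw [tailSum_counts _ (mem_Icc.1 hj).1]
  · rcases Nat.eq_zero_or_pos j with rfl | hj0
    · exact if_neg hp
    · rw [lam.conj_eq_zero (by simp only [mem_Icc] at hj; omega), ite_self]

end CPartition

/-- A row of length `t` has `⌈t/2⌉` boxes in odd columns and `⌊t/2⌋` in even ones. -/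
noncomputable def rowWeight (t : ℕ) : Fin 2 →₀ ℕ :=
  Finsupp.single 0 ((t + 1) / 2) + Finsupp.single 1 (t / 2)

theorem rowWeight_ne_zero {t : ℕ} (ht : t ≠ 0) : rowWeight t ≠ 0 := fun h => by
  have := DFunLike.congr_fun h 0
  simp [rowWeight] at this
  omega

theorem sum_smul_rowWeight (c : ℕ →₀ ℕ) :
    (c.sum fun t k => k • rowWeight t) =
      Finsupp.single 0 (c.sum fun t k => k * ((t + 1) / 2)) +
        Finsupp.single 1 (c.sum fun t k => k * (t / 2)) := by
  simp only [rowWeight, smul_add, Finsupp.smul_single, smul_eq_mul, Finsupp.sum,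
    sum_add_distrib, Finsupp.single_finsetSum]

theorem single_zero_add_single_one_inj {a b a' b' : ℕ}
    (h : Finsupp.single (0 : Fin 2) a + Finsupp.single 1 b =
      Finsupp.single 0 a' + Finsupp.single 1 b') : a = a' ∧ b = b' :=
  ⟨by simpa using DFunLike.congr_fun h 0, by simpa using DFunLike.congr_fun h 1⟩

namespace MvPowerSeries

variable {k : Type*} [Field k]

theorem X_zero_mul_X_one_pow (j : ℕ) :
    ((X 0 * X 1) ^ j : MvPowerSeries (Fin 2) k) = monomial (rowWeight (2 * j)) 1 := by
  rw [X, X, monomial_mul_monomial, monomial_pow, one_mul, one_pow]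
  congr 2
  ext a; fin_cases a <;> simp [rowWeight]
  omega

theorem X_zero_mul_X_zero_mul_X_one_pow {j : ℕ} (hj : 1 ≤ j) :
    (X 0 * (X 0 * X 1) ^ (j - 1) : MvPowerSeries (Fin 2) k) =
      monomial (rowWeight (2 * j - 1)) 1 := by
  rw [X_zero_mul_X_one_pow, X, monomial_mul_monomial, one_mul]
  congr 2
  ext a; fin_cases a <;> simp [rowWeight] <;> omega

end MvPowerSeries

namespace CPartition

variable (lam : CPartition)

theorem oddCols_eq_sum_counts : lam.oddCols = lam.counts.sum fun t k => k * ((t + 1) / 2) := by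
  simp only [oddCols, lam.tsum_ite_conj _ Nat.not_odd_zero, card_filter_odd_Icc]

theorem evenCols_eq_sum_counts : lam.evenCols = lam.counts.sum fun t k => k * (t / 2) := by
  simp only [evenCols, lam.tsum_ite_conj (fun j => Even j ∧ j ≠ 0) fun h => h.2 rfl,
    card_filter_even_Icc]

theorem sum_counts_smul_rowWeight :
    (lam.counts.sum fun t k => k • rowWeight t) =
      Finsupp.single 0 lam.oddCols + Finsupp.single 1 lam.evenCols := by
  rw [sum_smul_rowWeight, oddCols_eq_sum_counts, evenCols_eq_sum_counts]

theorem oddCols_add_evenCols : lam.oddCols + lam.evenCols = lam.counts.sum fun t k => k * t := by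
  rw [oddCols_eq_sum_counts, evenCols_eq_sum_counts, ← Finsupp.sum_add]
  exact Finsupp.sum_congr fun t _ => by rw [← mul_add]; congr 1; omega

theorem natCard_oddCols_evenCols_eq {m n M : ℕ} (hM : m + n ≤ M) :
    Nat.card {lam : CPartition // lam.oddCols = m ∧ lam.evenCols = n} =
      Nat.card {c : ℕ →₀ ℕ // c.support ⊆ Icc 1 M ∧
        (c.sum fun t k => k • rowWeight t) = Finsupp.single 0 m + Finsupp.single 1 n} := by
  have support_counts {lam : CPartition} (hlam : lam.oddCols = m ∧ lam.evenCols = n) :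
      lam.counts.support ⊆ Icc 1 M := fun t ht => by
    have hsize := Finsupp.le_sum_mul_self_of_mem_support ht
    rw [← oddCols_add_evenCols, hlam.1, hlam.2] at hsize
    have := (mem_Icc.1 (lam.counts_support_subset ht)).1
    exact mem_Icc.2 ⟨this, hsize.trans hM⟩
  have apply_zero {c : ℕ →₀ ℕ} (hc : c.support ⊆ Icc 1 M) : c 0 = 0 :=
    Finsupp.notMem_support_iff.1 fun h => by simpa using hc h
  refine Nat.card_congr
    { toFun lam := ⟨lam.1.counts, support_counts lam.2, by
        rw [sum_counts_smul_rowWeight, lam.2.1, lam.2.2]⟩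
      invFun c := ⟨ofCounts c.1, single_zero_add_single_one_inj <| by
        rw [← sum_counts_smul_rowWeight, counts_ofCounts (apply_zero c.2.1), c.2.2]⟩
      left_inv lam := Subtype.ext lam.1.ofCounts_counts
      right_inv c := Subtype.ext (counts_ofCounts (apply_zero c.2.1)) }

end CPartition

open MvPowerSeries in
/-- The character of a single vertical two-colored partition:
`Σ_λ u^{o(λ)} v^{e(λ)} = ∏_{j≥1} (1-(uv)^j)⁻¹ (1-u(uv)^{j-1})⁻¹`,
stated coefficientwise (any truncation `N ≥ m + n` of the infinite product
computes the coefficient of `u^m v^n`). -/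
theorem vertical_partition_character (m n : ℕ) (N : ℕ) (hN : m + n ≤ N) :
    MvPowerSeries.coeff (Finsupp.single 0 m + Finsupp.single 1 n)
      (∏ j ∈ Finset.Icc 1 N,
        ((1 - (MvPowerSeries.X 0 * MvPowerSeries.X 1) ^ j)⁻¹ *
          (1 - MvPowerSeries.X 0 * (MvPowerSeries.X 0 * MvPowerSeries.X 1) ^ (j - 1))⁻¹ :
            MvPowerSeries (Fin 2) ℚ))
    = Nat.card {lam : CPartition // lam.oddCols = m ∧ lam.evenCols = n} := by
  have hfactor (j : ℕ) (hj : j ∈ Icc 1 N) :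
      ((1 - (X 0 * X 1) ^ j)⁻¹ * (1 - X 0 * (X 0 * X 1) ^ (j - 1))⁻¹ : MvPowerSeries (Fin 2) ℚ) =
        (1 - monomial (rowWeight (2 * j)) 1)⁻¹ * (1 - monomial (rowWeight (2 * j - 1)) 1)⁻¹ := by
    rw [X_zero_mul_X_one_pow, X_zero_mul_X_zero_mul_X_one_pow (mem_Icc.1 hj).1]
  rw [prod_congr rfl hfactor, prod_Icc_one_two_mul (fun t => (1 - monomial (rowWeight t) 1)⁻¹),
    coeff_prod_inv_one_sub_monomial _ _ fun t ht => rowWeight_ne_zero (by simp at ht; omega),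
    CPartition.natCard_oddCols_evenCols_eq (M := 2 * N) (by omega)]
end

section
/- Let m ≥ 1 be an integer. The map sending (a₀,…,a_m, b₀,…,b_{m−1}) to (ã₀, c₀,…,c_{m−1}, d₀,…,d_{m−1}), where c_i = b_i − a_i, d_i = b_i − a_{i+1}, and ã₀ = Σ_{i=0}^{m} a_i − Σ_{i=0}^{m−1} b_i, is a bijection from the set of tuples of nonnegative integers (a₀,…,a_m, b₀,…,b_{m−1}) satisfying b_i ≥ a_i, b_i ≥ a_{i+1} for all i = 0,…,m−1 and Σ_{i=0}^{m} a_i ≥ Σ_{i=0}^{m−1} b_i, onto the set ℕ × ℕ^m × ℕ^m of all tuples of nonnegative integers (ã₀, c₀,…,c_{m−1}, d₀,…,d_{m−1}). -/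
/-- The combinatorial bijection behind the character computation for the
slanted relaxed Verma module: tower configurations `(a, b)` of nonnegative
integers with `b_i ≥ a_i`, `b_i ≥ a_{i+1}` and `Σa ≥ Σb` correspond
bijectively, via `(ã₀, c, d)` with `c_i = b_i − a_i`, `d_i = b_i − a_{i+1}` and
`ã₀ = Σa − Σb`, to arbitrary tuples of nonnegative integers. -/
theorem tower_configurations_bijection (m : ℕ) (hm : 1 ≤ m) :
    Function.Bijective
      (fun x : {p : (Fin (m + 1) → ℕ) × (Fin m → ℕ) //
          (∀ i : Fin m, p.1 i.castSucc ≤ p.2 i) ∧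
          (∀ i : Fin m, p.1 i.succ ≤ p.2 i) ∧
          (∑ i, p.2 i) ≤ ∑ i, p.1 i} =>
        (((∑ i, x.1.1 i) - ∑ i, x.1.2 i,
          fun i => x.1.2 i - x.1.1 i.castSucc,
          fun i => x.1.2 i - x.1.1 i.succ) :
            ℕ × (Fin m → ℕ) × (Fin m → ℕ))) := by
  constructor
  · rintro ⟨⟨A, B⟩, h1, h2, h3⟩ ⟨⟨A', B'⟩, h1', h2', h3'⟩ h
    simp only [Prod.mk.injEq] at h
    obtain ⟨ht, hc, hd⟩ := h
    dsimp only at h1 h2 h3 h1' h2' h3' ht hc hd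
    have hc' : ∀ i : Fin m, B i - A i.castSucc = B' i - A' i.castSucc :=
      fun i => congrFun hc i
    have hd' : ∀ i : Fin m, B i - A i.succ = B' i - A' i.succ :=
      fun i => congrFun hd i
    have fact1 : ∀ i : Fin m, A i.succ + A' i.castSucc = A i.castSucc + A' i.succ := by
      intro i
      have e1 := hc' i; have e2 := hd' i
      have := h1 i; have := h2 i; have := h1' i; have := h2' i
      omega
    have fact2 : ∀ i : Fin m, B i + A' i.castSucc = B' i + A i.castSucc := by
      intro i
      have e1 := hc' i
      have := h1 i; have := h1' i
      omega
    have const : ∀ i : Fin (m+1), A i + A' 0 = A 0 + A' i := by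
      intro i
      induction i using Fin.induction with
      | zero => omega
      | succ i ih =>
        have := fact1 i
        omega
    have fact3 : ∀ i : Fin m, B i + A' 0 = B' i + A 0 := by
      intro i
      have := fact2 i
      have := const i.castSucc
      omega
    have percomb : ∀ i : Fin m, A i.succ + B' i = A' i.succ + B i := by
      intro i
      have := const i.succ
      have := fact3 i
      omega
    have sumcomb : (∑ i : Fin m, A i.succ) + (∑ i, B' i)
        = (∑ i : Fin m, A' i.succ) + ∑ i, B i := by
      rw [← Finset.sum_add_distrib, ← Finset.sum_add_distrib]
      exact Finset.sum_congr rfl fun i _ => percomb i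
    have splitA : (∑ i, A i) = A 0 + ∑ i : Fin m, A i.succ := Fin.sum_univ_succ A
    have splitA' : (∑ i, A' i) = A' 0 + ∑ i : Fin m, A' i.succ := Fin.sum_univ_succ A'
    have hA0 : A 0 = A' 0 := by omega
    have hAeq : A = A' := by
      funext i
      have := const i
      omega
    have hBeq : B = B' := by
      funext i
      have := fact3 i
      omega
    exact Subtype.ext (Prod.ext hAeq hBeq)
  · rintro ⟨t, c, d⟩
    set A : Fin (m+1) → ℕ := fun i =>
      t + (∑ j : Fin m, if (i : ℕ) ≤ (j : ℕ) then d j else 0)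
        + ∑ j : Fin m, if (j : ℕ) < (i : ℕ) then c j else 0 with hA
    set B : Fin m → ℕ := fun i => A i.castSucc + c i with hB
    have stepd : ∀ i : Fin m,
        (∑ j : Fin m, if (i : ℕ) ≤ (j : ℕ) then d j else 0)
          = d i + ∑ j : Fin m, if (i : ℕ) + 1 ≤ (j : ℕ) then d j else 0 := by
      intro i
      have hterm : ∀ j : Fin m, (if (i : ℕ) ≤ (j : ℕ) then d j else 0)
          = (if j = i then d j else 0) + (if (i : ℕ) + 1 ≤ (j : ℕ) then d j else 0) := by
        intro j
        have hji : j = i ↔ (j : ℕ) = (i : ℕ) := Fin.ext_iff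
        split_ifs <;> omega
      rw [Finset.sum_congr rfl fun j _ => hterm j, Finset.sum_add_distrib,
        Finset.sum_ite_eq' Finset.univ i d]
      simp
    have stepc : ∀ i : Fin m,
        (∑ j : Fin m, if (j : ℕ) < (i : ℕ) + 1 then c j else 0)
          = c i + ∑ j : Fin m, if (j : ℕ) < (i : ℕ) then c j else 0 := by
      intro i
      have hterm : ∀ j : Fin m, (if (j : ℕ) < (i : ℕ) + 1 then c j else 0)
          = (if j = i then c j else 0) + (if (j : ℕ) < (i : ℕ) then c j else 0) := by
        intro j
        have hji : j = i ↔ (j : ℕ) = (i : ℕ) := Fin.ext_iff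
        split_ifs <;> omega
      rw [Finset.sum_congr rfl fun j _ => hterm j, Finset.sum_add_distrib,
        Finset.sum_ite_eq' Finset.univ i c]
      simp
    have stepA : ∀ i : Fin m, A i.castSucc + c i = A i.succ + d i := by
      intro i
      have hd1 := stepd i
      have hc1 := stepc i
      simp only [hA, Fin.coe_castSucc, Fin.val_succ]
      omega
    have hBd : ∀ i : Fin m, B i = A i.succ + d i := by
      intro i
      rw [hB]
      exact stepA i
    have hA0 : A 0 = t + ∑ j, d j := by
      simp [hA]
    have splitA : (∑ i, A i) = A 0 + ∑ i : Fin m, A i.succ := Fin.sum_univ_succ A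
    have sumB : (∑ i, B i) = (∑ i : Fin m, A i.succ) + ∑ i, d i := by
      rw [← Finset.sum_add_distrib]
      exact Finset.sum_congr rfl fun i _ => hBd i
    have hsum : (∑ i, A i) = t + ∑ i, B i := by omega
    refine ⟨⟨⟨A, B⟩, fun i => by dsimp only; simp [hB], fun i => by dsimp only; have := hBd i; omega, by dsimp only; omega⟩, ?_⟩
    simp only [Prod.mk.injEq]
    refine ⟨by omega, funext fun i => by simp [hB], funext fun i => by have := hBd i; omega⟩
end

section
/- Let m ≥ 1 be an integer and let t ∈ ℂ with 0 < |t| < 1. Then (1/(2πi)) ∮_{|z|=1} [ (1 − z t^m) ∏_{j=1}^{m} (1 − t^j)² ∏_{i=1}^{∞} (1 − t^i)² (1 − t^i/z)² ]^{−1} dz/z = ∏_{i=1}^{∞} (1 − t^i)^{−4}. (For |t| < 1 the infinite products converge and the integrand is continuous and nonvanishing on the circle |z| = 1, so the integral is well defined.) -/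
/-!
On the unit circle the substitution `z ↦ z⁻¹` preserves `dz / (2πi z)`, and turns the integrand
into `z / (z - t^m) · f z` with `f z = (P · ((t; t)_∞ (tz; t)_∞)²)⁻¹`,
`P = ∏_{j ≤ m} (1 - t^j)²`. The `q`-Pochhammer product
`(tz; t)_∞` converges locally uniformly in `z`, so it is entire, and it has no zero on the closed
unit disc; hence Cauchy's formula evaluates the integral to `f (t^m)`. Finally
`(t; t)_∞ = ∏_{j ≤ m} (1 - t^j) · (t^{m+1}; t)_∞`, so `P` cancels and `f (t^m) = (t; t)_∞⁻⁴`.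
-/

open scoped Real

open Complex Metric Finset

theorem Real.circleAverage_zero_eq_circleIntegral_div {R : ℝ} (hR : R ≠ 0) (F : ℂ → ℂ) :
    circleAverage F 0 R = (2 * π * I)⁻¹ * ∮ z in C(0, R), F z / z := by
  simp only [Real.circleAverage_eq_circleIntegral hR, smul_eq_mul, div_eq_inv_mul, sub_zero]

/-- `qPoch t z` is the `q`-Pochhammer symbol `(tz; t)_∞`. -/
noncomputable def qPoch (t z : ℂ) : ℂ := ∏' n : ℕ, (1 - t ^ (n + 1) * z)

section qPoch

variable {t : ℂ}

lemma summable_norm_pow_succ_mul (ht : ‖t‖ < 1) (z : ℂ) :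
    Summable fun n : ℕ ↦ ‖t ^ (n + 1) * z‖ := by
  simpa [pow_succ, mul_assoc] using
    (summable_geometric_of_lt_one (norm_nonneg _) ht).mul_right (‖t‖ * ‖z‖)

lemma multipliable_one_sub_pow_succ_mul (ht : ‖t‖ < 1) (z : ℂ) :
    Multipliable fun n : ℕ ↦ 1 - t ^ (n + 1) * z := by
  simpa [sub_eq_add_neg] using
    multipliable_one_add_of_summable (f := fun n : ℕ ↦ -(t ^ (n + 1) * z))
      (by simpa using summable_norm_pow_succ_mul ht z)

lemma qPoch_ne_zero (ht : ‖t‖ < 1) {z : ℂ} (hz : ∀ n : ℕ, t ^ (n + 1) * z ≠ 1) :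
    qPoch t z ≠ 0 := by
  simpa [qPoch, sub_eq_add_neg] using
    tprod_one_add_ne_zero_of_summable (f := fun n : ℕ ↦ -(t ^ (n + 1) * z))
      (fun n ↦ by rw [← sub_eq_add_neg, sub_ne_zero, ne_comm]; exact hz n)
      (by simpa using summable_norm_pow_succ_mul ht z)

lemma qPoch_ne_zero_of_norm_le_one (ht : ‖t‖ < 1) {z : ℂ} (hz : ‖z‖ ≤ 1) :
    qPoch t z ≠ 0 := by
  refine qPoch_ne_zero ht fun n h ↦ ?_
  have : ‖t ^ (n + 1) * z‖ < 1 := by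
    rw [norm_mul, norm_pow]
    exact mul_lt_one_of_nonneg_of_lt_one_left (by positivity)
      (pow_lt_one₀ (norm_nonneg _) ht n.succ_ne_zero) hz
  simp [h] at this

lemma differentiable_qPoch (ht : ‖t‖ < 1) : Differentiable ℂ (qPoch t) := by
  intro z₀
  set R := ‖z₀‖ + 1
  have hbound : ∀ n : ℕ, ∀ z ∈ ball (0 : ℂ) R, ‖-(t ^ (n + 1) * z)‖ ≤ ‖t ^ (n + 1) * R‖ := by
    intro n z hz
    rw [norm_neg, norm_mul, norm_mul, norm_real, Real.norm_of_nonneg (by positivity)]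
    exact mul_le_mul_of_nonneg_left (mem_ball_zero_iff.mp hz).le (norm_nonneg _)
  have hprod : HasProdLocallyUniformlyOn (fun n z ↦ 1 + -(t ^ (n + 1) * z)) (qPoch t)
      (ball 0 R) := by
    convert (summable_norm_pow_succ_mul ht R).hasProdLocallyUniformlyOn_nat_one_add isOpen_ball
      (.of_forall hbound) (fun n ↦ by fun_prop) using 1
    ext z
    simp only [qPoch, sub_eq_add_neg]
  exact (hprod.differentiableOn (.of_forall fun s ↦ by
    simpa [Finset.prod_fn] using DifferentiableOn.finsetProd (fun _ _ ↦ by fun_prop))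
    isOpen_ball).differentiableAt (isOpen_ball.mem_nhds (by simp [R]))

lemma prod_range_mul_qPoch_pow (ht : ‖t‖ < 1) (m : ℕ) :
    (∏ n ∈ range m, (1 - t ^ (n + 1))) * qPoch t (t ^ m) = qPoch t 1 := by
  have hshift : ∀ n, 1 - t ^ (n + 1) * t ^ m = 1 - t ^ (n + m + 1) := fun n ↦ by ring
  have := Multipliable.prod_mul_tprod_nat_mul' (f := fun n ↦ 1 - t ^ (n + 1)) (k := m)
    (by simpa only [hshift] using multipliable_one_sub_pow_succ_mul ht (t ^ m))
  simpa only [qPoch, mul_one, hshift] using this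

lemma tprod_sq_mul_sq (ht : ‖t‖ < 1) (z : ℂ) :
    ∏' n : ℕ, ((1 - t ^ (n + 1)) ^ 2 * (1 - t ^ (n + 1) * z) ^ 2)
      = (qPoch t 1 * qPoch t z) ^ 2 := by
  have h1 := multipliable_one_sub_pow_succ_mul ht 1
  simp only [mul_one] at h1
  simp only [← mul_pow, qPoch, mul_one]
  rw [(h1.mul (multipliable_one_sub_pow_succ_mul ht z)).tprod_pow,
    h1.tprod_mul (multipliable_one_sub_pow_succ_mul ht z)]

lemma tprod_inv_one_sub_pow_succ_pow (ht : ‖t‖ < 1) (k : ℕ) :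
    ∏' n : ℕ, ((1 - t ^ (n + 1)) ^ k)⁻¹ = (qPoch t 1 ^ k)⁻¹ := by
  have h1 := multipliable_one_sub_pow_succ_mul ht 1
  have hq1 := pow_ne_zero k (qPoch_ne_zero_of_norm_le_one ht norm_one.le)
  simp only [mul_one, qPoch] at h1 hq1 ⊢
  rw [(h1.pow k).tprod_inv₀ (by rwa [h1.tprod_pow]), h1.tprod_pow]

end qPoch

lemma prod_Icc_one_sub_pow_sq {R : Type*} [CommRing R] (t : R) (m : ℕ) :
    ∏ j ∈ Icc 1 m, (1 - t ^ j) ^ 2 = (∏ n ∈ range m, (1 - t ^ (n + 1))) ^ 2 := by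
  rw [← prod_pow, ← Finset.Ico_add_one_right_eq_Icc, prod_Ico_eq_prod_range]
  simp only [add_tsub_cancel_right, add_comm]

theorem tower_constant_coefficient_integral_general
    (m : ℕ) (hm : 1 ≤ m) (t : ℂ) (ht1 : ‖t‖ < 1) :
    (2 * (Real.pi : ℂ) * Complex.I)⁻¹ *
      (∮ z in C(0, 1),
        ((1 - z * t ^ m) * (∏ j ∈ Finset.Icc 1 m, (1 - t ^ j) ^ 2) *
            ∏' i : ℕ, ((1 - t ^ (i + 1)) ^ 2 * (1 - t ^ (i + 1) / z) ^ 2))⁻¹ / z)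
    = ∏' i : ℕ, ((1 - t ^ (i + 1)) ^ 4)⁻¹ := by
  set p := ∏ n ∈ range m, (1 - t ^ (n + 1))
  set f : ℂ → ℂ := fun z ↦ (p ^ 2 * (qPoch t 1 * qPoch t z) ^ 2)⁻¹
  have hshift : p * qPoch t (t ^ m) = qPoch t 1 := prod_range_mul_qPoch_pow ht1 m
  have hq1 := qPoch_ne_zero_of_norm_le_one ht1 norm_one.le
  have hf : DiffContOnCl ℂ f (ball 0 |1|) := by
    refine DifferentiableOn.diffContOnCl_ball (U := closedBall 0 1) (fun z hz ↦ ?_) (by simp)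
    refine (((differentiable_qPoch ht1 z).const_mul _).pow 2 |>.const_mul _).inv ?_
      |>.differentiableWithinAt
    exact mul_ne_zero (pow_ne_zero 2 (left_ne_zero_of_mul (hshift ▸ hq1))) (pow_ne_zero 2
      (mul_ne_zero hq1 (qPoch_ne_zero_of_norm_le_one ht1 (mem_closedBall_zero_iff.mp hz))))
  have htm : t ^ m ∈ ball (0 : ℂ) |1| := by
    simpa using pow_lt_one₀ (norm_nonneg t) ht1 (by omega : m ≠ 0)
  rw [prod_Icc_one_sub_pow_sq, ← Real.circleAverage_zero_eq_circleIntegral_div one_ne_zero,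
    ← Real.circleAverage_zero_one_congr_inv,
    Real.circleAverage_congr_sphere (f₂ := fun z ↦ ((z - 0) / (z - t ^ m)) • f z),
    hf.circleAverage_smul_div htm, tprod_inv_one_sub_pow_succ_pow ht1]
  · simp only [f, ← hshift]
    ring
  · intro z hz
    have hz0 : z ≠ 0 := ne_zero_of_mem_sphere (by norm_num) ⟨z, hz⟩
    have hinv : 1 - z⁻¹ * t ^ m = (z - t ^ m) / z := by field_simp
    simp only [div_inv_eq_mul, tprod_sq_mul_sq ht1, hinv, f, sub_zero, smul_eq_mul]
    rw [mul_assoc, mul_inv, inv_div]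

/-- The contour-integral computation extracting the constant coefficient in `z`
of the generating function of the tower states of the slanted relaxed Verma
module:
`(1/2πi) ∮_{|z|=1} [(1−zt^m) ∏_{j=1}^m (1−t^j)² ∏_{i≥1} (1−t^i)²(1−t^i/z)²]⁻¹ dz/z
  = ∏_{i≥1} (1−t^i)⁻⁴`. -/
theorem tower_constant_coefficient_integral
    (m : ℕ) (hm : 1 ≤ m) (t : ℂ) (ht0 : 0 < ‖t‖) (ht1 : ‖t‖ < 1) :
    (2 * (Real.pi : ℂ) * Complex.I)⁻¹ *
      (∮ z in C(0, 1),
        ((1 - z * t ^ m) * (∏ j ∈ Finset.Icc 1 m, (1 - t ^ j) ^ 2) *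
            ∏' i : ℕ, ((1 - t ^ (i + 1)) ^ 2 * (1 - t ^ (i + 1) / z) ^ 2))⁻¹ / z)
    = ∏' i : ℕ, ((1 - t ^ (i + 1)) ^ 4)⁻¹ :=
  tower_constant_coefficient_integral_general m hm t ht1
end

section
/- Let m ≥ 1 be an integer and let s, r ∈ ℂˣ be generic. Define Ψ⁰_{m,s,r}(z) = s r² q₃^{1−m} · (z − q₃⁻²)(z − q₁⁻¹q₃⁻¹s²) ∏_{i=1}^{m−1}(z − s²r² q₁ⁱ q₃⁻ⁱ) / ∏_{i=0}^{m}(z − q² s²r² q₁ⁱ q₃⁻ⁱ) and Ψ¹_{m,s,r}(z) = s⁻¹ r⁻² q₃^{m} · ∏_{i=0}^{m+1}(z − q₁^{i−1} q₃^{−i} s²r²) / [ (z − q₃⁻¹)(z − q₁⁻¹ s²) ∏_{i=0}^{m−1}(z − q₁^{i+1} q₃^{−i} s²r²) ]. Then, componentwise as rational functions of z (wherever denominators are nonzero), (Ψ⁰_{m,s,r}(z), Ψ¹_{m,s,r}(z)) · ∏_{i=0}^{m} A_{0, q₁ⁱ q₃⁻ⁱ s²r²}(z)⁻¹ · ∏_{i=0}^{m−1}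 A_{1, q₁^{i+1} q₃^{−i} s²r²}(z)⁻¹ = (Ψ⁰_{m,s,rq⁻¹}(z), Ψ¹_{m,s,rq⁻¹}(z)). -/
noncomputable section

/-- The zeroth component `Ψ⁰_{m,s,r}(z)` of the highest ℓ-weight of the slanted
relaxed Verma module, with `s = q^{-μ}`, `r = q^{-ν}`. -/
def slantedPsi0 (q q1 q3 : ℂ) (m : ℕ) (s r : ℂ) : RatFunc ℂ :=
  RatFunc.C (s * r ^ 2 * q3 ^ (1 - (m : ℤ))) *
    ((RatFunc.X - RatFunc.C (q3 ^ (-2 : ℤ))) *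
      (RatFunc.X - RatFunc.C (q1⁻¹ * q3⁻¹ * s ^ 2)) *
      ∏ i ∈ Finset.Ico 1 m,
        (RatFunc.X - RatFunc.C (s ^ 2 * r ^ 2 * q1 ^ i * q3 ^ (-(i : ℤ))))) /
    ∏ i ∈ Finset.range (m + 1),
      (RatFunc.X - RatFunc.C (q ^ 2 * s ^ 2 * r ^ 2 * q1 ^ i * q3 ^ (-(i : ℤ))))

/-- The first component `Ψ¹_{m,s,r}(z)` of the highest ℓ-weight of the slanted
relaxed Verma module, with `s = q^{-μ}`, `r = q^{-ν}`. -/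
def slantedPsi1 (q q1 q3 : ℂ) (m : ℕ) (s r : ℂ) : RatFunc ℂ :=
  RatFunc.C (s⁻¹ * r ^ (-2 : ℤ) * q3 ^ (m : ℤ)) *
    (∏ i ∈ Finset.range (m + 2),
      (RatFunc.X - RatFunc.C (q1 ^ ((i : ℤ) - 1) * q3 ^ (-(i : ℤ)) * s ^ 2 * r ^ 2))) /
    ((RatFunc.X - RatFunc.C q3⁻¹) * (RatFunc.X - RatFunc.C (q1⁻¹ * s ^ 2)) *
      ∏ i ∈ Finset.range m,
        (RatFunc.X - RatFunc.C (q1 ^ (i + 1) * q3 ^ (-(i : ℤ)) * s ^ 2 * r ^ 2)))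

/-!
All components are ratios of linear factors `z - c`, and inverting `A_{0,a}` or `A_{1,a}`
only moves their roots by powers of `q₁, q₂, q₃`. Along the staircase, with white parameters
`aᵢ = q₁ⁱ q₃⁻ⁱ s² r²` and black parameters `q₁ aᵢ`, the relation `q₁ q₂ q₃ = 1` makes the
roots of neighbouring boxes cancel, so the product of the inverse weights telescopes to a
constant times a short ratio of products over the `aᵢ`. Replacing `r` by `r q⁻¹` multiplies
every `aᵢ` by `q₂⁻¹`, and that ratio is exactly what turns `Ψ_{m,s,r}` into `Ψ_{m,s,rq⁻¹}`.
-/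

open RatFunc Finset

section
variable {K : Type*} [Field K]

def linearFactor (c : K) : RatFunc K := X - C c

theorem linearFactor_ne_zero (c : K) : linearFactor c ≠ 0 := by
  rw [linearFactor, ← algebraMap_X, ← algebraMap_C, ← map_sub]
  exact (map_ne_zero_iff _ (IsFractionRing.injective (Polynomial K) (RatFunc K))).mpr
    (Polynomial.X_sub_C_ne_zero c)

theorem prod_linearFactor_ne_zero (s : Finset ℕ) (a : ℕ → K) :
    ∏ i ∈ s, linearFactor (a i) ≠ 0 :=
  prod_ne_zero_iff.mpr fun i _ => linearFactor_ne_zero (a i)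

def blockRatio (c a : K) : RatFunc K := (C c * X - C a) / (X - C (c * a))

theorem inv_blockRatio {c : K} (hc : c ≠ 0) (a : K) :
    (blockRatio c a)⁻¹ = C c⁻¹ * (linearFactor (c * a) / linearFactor (c⁻¹ * a)) := by
  have : C c * X - C a = C c * linearFactor (c⁻¹ * a) := by
    rw [linearFactor, mul_sub, ← map_mul, mul_inv_cancel_left₀ hc]
  rw [blockRatio, inv_div, this, map_inv₀, ← linearFactor]
  field_simp

theorem ne_zero_of_mul_mul_eq_one {q1 q2 q3 : K} (h : q1 * q2 * q3 = 1) :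
    q1 ≠ 0 ∧ q2 ≠ 0 ∧ q3 ≠ 0 := by
  refine ⟨?_, ?_, ?_⟩ <;> rintro rfl <;> simp at h

variable {q1 q2 q3 : K} (h : q1 * q2 * q3 = 1) {a : ℕ → K}
  (ha : ∀ i, q3 * a (i + 1) = q1 * a i)
include h ha

theorem prod_inv_blockRatio_staircase_fst {m : ℕ} (hm : 1 ≤ m) :
    (∏ i ∈ range (m + 1), (blockRatio q2 (a i))⁻¹) *
        ∏ i ∈ range m, (blockRatio q1 (q1 * a i) * blockRatio q3 (q1 * a i))⁻¹ =
      C q2⁻¹ * ((∏ i ∈ range (m + 1), linearFactor (q2 * a i)) *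
          ∏ i ∈ Ico 1 m, linearFactor (q2⁻¹ * a i)) /
        ((∏ i ∈ range (m + 1), linearFactor (a i)) * ∏ i ∈ Ico 1 m, linearFactor (a i)) := by
  obtain ⟨hq1, hq2, hq3⟩ := ne_zero_of_mul_mul_eq_one h
  have hq2' : q2⁻¹ = q1 * q3 := (eq_inv_of_mul_eq_one_left (by linear_combination h)).symm
  have root_q1 : ∀ i, q1 * (q1 * a i) = q2⁻¹ * a (i + 1) := fun i => by
    rw [hq2', mul_assoc, ha]
  have root_q1_inv : ∀ i, q1⁻¹ * (q1 * a i) = a i := fun i => inv_mul_cancel_left₀ hq1 _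
  have root_q3 : ∀ i, q3 * (q1 * a i) = q2⁻¹ * a i := fun i => by rw [hq2']; ring
  have root_q3_inv : ∀ i, q3⁻¹ * (q1 * a i) = a (i + 1) := fun i => by
    rw [← ha, inv_mul_cancel_left₀ hq3]
  induction m, hm using Nat.le_induction with
  | base =>
    simp only [zero_add, prod_range_succ, prod_range_zero, Ico_self, prod_empty, one_mul, mul_one,
      mul_inv, inv_blockRatio hq1, inv_blockRatio hq2, inv_blockRatio hq3, root_q1, root_q1_inv,
      root_q3, root_q3_inv]
    simp only [hq2', map_mul, map_inv₀]
    field_simp [linearFactor_ne_zero]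
  | succ m hm ih =>
    rw [prod_range_succ (fun i => (blockRatio q2 (a i))⁻¹) (m + 1),
      prod_range_succ (fun i => (blockRatio q1 (q1 * a i) * blockRatio q3 (q1 * a i))⁻¹) m,
      mul_mul_mul_comm, ih, prod_range_succ (fun i => linearFactor (q2 * a i)) (m + 1),
      prod_range_succ (fun i => linearFactor (a i)) (m + 1), prod_Ico_succ_top hm,
      prod_Ico_succ_top hm]
    simp only [mul_inv, inv_blockRatio hq1, inv_blockRatio hq2, inv_blockRatio hq3, root_q1,
      root_q1_inv, root_q3, root_q3_inv]
    simp only [hq2', map_mul, map_inv₀]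
    field_simp [linearFactor_ne_zero, prod_linearFactor_ne_zero]

theorem prod_inv_blockRatio_staircase_snd (m : ℕ) :
    (∏ i ∈ range (m + 1), (blockRatio q1 (a i) * blockRatio q3 (a i))⁻¹) *
        ∏ i ∈ range m, (blockRatio q2 (q1 * a i))⁻¹ =
      C q2 * ((∏ i ∈ range (m + 1), linearFactor (q1 * a i)) *
          ∏ i ∈ range (m + 1), linearFactor (q3 * a i)) /
        ((∏ i ∈ range (m + 2), linearFactor (q1⁻¹ * a i)) *
          ∏ i ∈ range m, linearFactor (q2⁻¹ * (q1 * a i))) := by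
  obtain ⟨hq1, hq2, hq3⟩ := ne_zero_of_mul_mul_eq_one h
  have hq2' : q2 = (q1 * q3)⁻¹ := eq_inv_of_mul_eq_one_left (by linear_combination h)
  have root_q3_inv : ∀ i, q3⁻¹ * a i = q1⁻¹ * a (i + 1) := fun i => by
    field_simp; linear_combination -ha i
  have root_q2 : ∀ i, q2 * (q1 * a i) = q1⁻¹ * a (i + 1) := fun i => by
    rw [← root_q3_inv, hq2']; field_simp
  induction m with
  | zero =>
    simp only [zero_add, prod_range_succ, prod_range_zero, one_mul, mul_one, mul_inv,
      inv_blockRatio hq1, inv_blockRatio hq3, root_q3_inv]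
    simp only [hq2', map_mul, map_inv₀]
    field_simp [linearFactor_ne_zero]
  | succ m ih =>
    rw [prod_range_succ (fun i => (blockRatio q1 (a i) * blockRatio q3 (a i))⁻¹) (m + 1),
      prod_range_succ (fun i => (blockRatio q2 (q1 * a i))⁻¹) m,
      mul_mul_mul_comm, ih, prod_range_succ (fun i => linearFactor (q1 * a i)) (m + 1),
      prod_range_succ (fun i => linearFactor (q3 * a i)) (m + 1),
      prod_range_succ (fun i => linearFactor (q1⁻¹ * a i)) (m + 2),
      prod_range_succ (fun i => linearFactor (q2⁻¹ * (q1 * a i))) m]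
    simp only [mul_inv, inv_blockRatio hq1, inv_blockRatio hq2, inv_blockRatio hq3, root_q3_inv,
      root_q2]
    simp only [hq2', map_mul, map_inv₀, inv_inv]
    field_simp [linearFactor_ne_zero, prod_linearFactor_ne_zero]
end

theorem rootA0_eq_s15 (q1 q2 q3 a : ℂ) :
    rootA0 q1 q2 q3 a = (blockRatio q2 a, blockRatio q1 a * blockRatio q3 a) := by
  simp only [rootA0, blockRatio, mul_div_mul_comm]

theorem rootA1_eq (q1 q2 q3 a : ℂ) :
    rootA1 q1 q2 q3 a = (blockRatio q1 a * blockRatio q3 a, blockRatio q2 a) := by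
  simp only [rootA1, blockRatio, mul_div_mul_comm]

def staircaseParam (q1 q3 s r : ℂ) (i : ℕ) : ℂ := q1 ^ i * q3 ^ (-(i : ℤ)) * s ^ 2 * r ^ 2

section
variable {q q1 q3 s r : ℂ} {m : ℕ}

theorem staircaseParam_succ (hq3 : q3 ≠ 0) (i : ℕ) :
    q3 * staircaseParam q1 q3 s r (i + 1) = q1 * staircaseParam q1 q3 s r i := by
  simp only [staircaseParam, Nat.cast_succ, neg_add, zpow_add₀ hq3, zpow_neg_one, pow_succ]
  field_simp

theorem staircaseParam_mul_inv (i : ℕ) :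
    staircaseParam q1 q3 s (r * q⁻¹) i = (q ^ 2)⁻¹ * staircaseParam q1 q3 s r i := by
  simp only [staircaseParam]; ring

theorem slantedPsi0_eq : slantedPsi0 q q1 q3 m s r =
    C (s * r ^ 2 * q3 ^ (1 - (m : ℤ))) *
      (linearFactor (q3 ^ (-2 : ℤ)) * linearFactor (q1⁻¹ * q3⁻¹ * s ^ 2) *
        ∏ i ∈ Ico 1 m, linearFactor (staircaseParam q1 q3 s r i)) /
      ∏ i ∈ range (m + 1), linearFactor (q ^ 2 * staircaseParam q1 q3 s r i) := by
  have h1 : ∀ i : ℕ, s ^ 2 * r ^ 2 * q1 ^ i * q3 ^ (-(i : ℤ)) = staircaseParam q1 q3 s r i :=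
    fun i => by rw [staircaseParam]; ring
  have h2 : ∀ i : ℕ, q ^ 2 * s ^ 2 * r ^ 2 * q1 ^ i * q3 ^ (-(i : ℤ)) =
      q ^ 2 * staircaseParam q1 q3 s r i := fun i => by rw [staircaseParam]; ring
  simp only [slantedPsi0, linearFactor, h1, h2]

theorem mul_staircaseParam (i : ℕ) :
    q1 * staircaseParam q1 q3 s r i = q1 ^ (i + 1) * q3 ^ (-(i : ℤ)) * s ^ 2 * r ^ 2 := by
  rw [staircaseParam]; ring

theorem slantedPsi1_eq (hq1 : q1 ≠ 0) : slantedPsi1 q q1 q3 m s r =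
    C (s⁻¹ * r ^ (-2 : ℤ) * q3 ^ (m : ℤ)) *
      (∏ i ∈ range (m + 2), linearFactor (q1⁻¹ * staircaseParam q1 q3 s r i)) /
      (linearFactor q3⁻¹ * linearFactor (q1⁻¹ * s ^ 2) *
        ∏ i ∈ range m, linearFactor (q1 * staircaseParam q1 q3 s r i)) := by
  have h1 : ∀ i : ℕ, q1 ^ ((i : ℤ) - 1) * q3 ^ (-(i : ℤ)) * s ^ 2 * r ^ 2 =
      q1⁻¹ * staircaseParam q1 q3 s r i := fun i => by
    rw [staircaseParam, zpow_sub_one₀ hq1, zpow_natCast]; ring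
  simp only [slantedPsi1, linearFactor, h1, ← mul_staircaseParam]

theorem slantedPsi0_mul_staircase (h : q1 * q ^ 2 * q3 = 1) (hm : 1 ≤ m) :
    slantedPsi0 q q1 q3 m s r *
        (∏ i ∈ range (m + 1), (blockRatio (q ^ 2) (staircaseParam q1 q3 s r i))⁻¹) *
        ∏ i ∈ range m, (blockRatio q1 (q1 * staircaseParam q1 q3 s r i) *
          blockRatio q3 (q1 * staircaseParam q1 q3 s r i))⁻¹ =
      slantedPsi0 q q1 q3 m s (r * q⁻¹) := by
  obtain ⟨-, hq2, hq3⟩ := ne_zero_of_mul_mul_eq_one h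
  rw [mul_assoc, prod_inv_blockRatio_staircase_fst h (staircaseParam_succ hq3) hm,
    slantedPsi0_eq, slantedPsi0_eq]
  simp only [staircaseParam_mul_inv, mul_inv_cancel_left₀ hq2]
  rw [show s * (r * q⁻¹) ^ 2 * q3 ^ (1 - (m : ℤ)) =
    s * r ^ 2 * q3 ^ (1 - (m : ℤ)) * (q ^ 2)⁻¹ by ring, map_mul C _ (q ^ 2)⁻¹]
  -- opaque constants, so that `field_simp` does not split them into incomparable pieces
  generalize C (s * r ^ 2 * q3 ^ (1 - (m : ℤ))) = κ
  generalize C (q ^ 2)⁻¹ = c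
  field_simp [linearFactor_ne_zero, prod_linearFactor_ne_zero]

theorem slantedPsi1_mul_staircase (h : q1 * q ^ 2 * q3 = 1) :
    slantedPsi1 q q1 q3 m s r *
        (∏ i ∈ range (m + 1), (blockRatio q1 (staircaseParam q1 q3 s r i) *
          blockRatio q3 (staircaseParam q1 q3 s r i))⁻¹) *
        ∏ i ∈ range m, (blockRatio (q ^ 2) (q1 * staircaseParam q1 q3 s r i))⁻¹ =
      slantedPsi1 q q1 q3 m s (r * q⁻¹) := by
  obtain ⟨hq1, hq2, hq3⟩ := ne_zero_of_mul_mul_eq_one h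
  have ha := staircaseParam_succ (q1 := q1) (s := s) (r := r) hq3
  have inv_mul_inv_mul : ∀ x : ℂ, q1⁻¹ * ((q ^ 2)⁻¹ * x) = q3 * x := fun x => by
    rw [eq_inv_of_mul_eq_one_right h, mul_inv, mul_assoc]
  rw [mul_assoc, prod_inv_blockRatio_staircase_snd h ha, slantedPsi1_eq hq1, slantedPsi1_eq hq1]
  simp only [staircaseParam_mul_inv, inv_mul_inv_mul, mul_left_comm q1 (q ^ 2)⁻¹]
  rw [prod_range_succ (fun i => linearFactor (q3 * staircaseParam q1 q3 s r i)) (m + 1), ha,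
    prod_range_succ (fun i => linearFactor (q1 * staircaseParam q1 q3 s r i)) m]
  have hκ : s⁻¹ * (r * q⁻¹) ^ (-2 : ℤ) * q3 ^ (m : ℤ) =
      s⁻¹ * r ^ (-2 : ℤ) * q3 ^ (m : ℤ) * q ^ 2 := by
    rw [mul_zpow, inv_zpow', neg_neg]; norm_cast; ring
  rw [hκ, map_mul C _ (q ^ 2)]
  generalize C (s⁻¹ * r ^ (-2 : ℤ) * q3 ^ (m : ℤ)) = κ
  generalize C (q ^ 2) = c
  field_simp [linearFactor_ne_zero, prod_linearFactor_ne_zero]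

end

theorem slanted_relaxed_verma_weight_shift_general
    (q d : ℂ) (hq : q ≠ 0) (hd : d ≠ 0)
    (q1 q2 q3 : ℂ) (hq1 : q1 = q⁻¹ * d) (hq2 : q2 = q ^ 2) (hq3 : q3 = q⁻¹ * d⁻¹)
    (m : ℕ) (hm : 1 ≤ m) (s r : ℂ) :
    (slantedPsi0 q q1 q3 m s r, slantedPsi1 q q1 q3 m s r) *
        (∏ i ∈ Finset.range (m + 1),
          (rootA0 q1 q2 q3 (q1 ^ i * q3 ^ (-(i : ℤ)) * s ^ 2 * r ^ 2))⁻¹) *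
        (∏ i ∈ Finset.range m,
          (rootA1 q1 q2 q3 (q1 ^ (i + 1) * q3 ^ (-(i : ℤ)) * s ^ 2 * r ^ 2))⁻¹)
      = (slantedPsi0 q q1 q3 m s (r * q⁻¹), slantedPsi1 q q1 q3 m s (r * q⁻¹)) := by
  subst hq2
  have h : q1 * q ^ 2 * q3 = 1 := by rw [hq1, hq3]; field_simp
  refine Prod.ext ?_ ?_
  · simp only [Prod.fst_mul, Prod.fst_prod, Prod.fst_inv, rootA0_eq_s15, rootA1_eq,
      ← mul_staircaseParam]
    exact slantedPsi0_mul_staircase h hm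
  · simp only [Prod.snd_mul, Prod.snd_prod, Prod.snd_inv, rootA0_eq_s15, rootA1_eq,
      ← mul_staircaseParam]
    exact slantedPsi1_mul_staircase h

/-- Multiplying the highest ℓ-weight `Ψ(G_{0,m}^{μ,ν})` of the slanted relaxed
Verma module by the ℓ-weights of one full staircase of `m+1` white and `m`
black boxes yields `Ψ(G_{0,m}^{μ,ν+1})`. -/
theorem slanted_relaxed_verma_weight_shift
    (q d : ℂ) (hq : q ≠ 0) (hd : d ≠ 0)
    (q1 q2 q3 : ℂ) (hq1 : q1 = q⁻¹ * d) (hq2 : q2 = q ^ 2) (hq3 : q3 = q⁻¹ * d⁻¹)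
    (m : ℕ) (hm : 1 ≤ m) (s r : ℂ) (hs : s ≠ 0) (hr : r ≠ 0)
    (hgen : ∀ a b c e : ℤ, q ^ a * d ^ b * s ^ c * r ^ e = 1 →
      a = 0 ∧ b = 0 ∧ c = 0 ∧ e = 0) :
    (slantedPsi0 q q1 q3 m s r, slantedPsi1 q q1 q3 m s r) *
        (∏ i ∈ Finset.range (m + 1),
          (rootA0 q1 q2 q3 (q1 ^ i * q3 ^ (-(i : ℤ)) * s ^ 2 * r ^ 2))⁻¹) *
        (∏ i ∈ Finset.range m,
          (rootA1 q1 q2 q3 (q1 ^ (i + 1) * q3 ^ (-(i : ℤ)) * s ^ 2 * r ^ 2))⁻¹)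
      = (slantedPsi0 q q1 q3 m s (r * q⁻¹), slantedPsi1 q q1 q3 m s (r * q⁻¹)) :=
  slanted_relaxed_verma_weight_shift_general q d hq hd q1 q2 q3 hq1 hq2 hq3 m hm s r

end
end
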